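/- Let w be a nonnegative locally integrable function on ℝ and suppose there exist α₀ ∈ (0,1) and C₀ ≥ 1 such that w({x : M⁺1_E(x) > α₀}) ≤ C₀ w(E) for all measurable sets E with 0 < w(E) < ∞. Then for every λ ∈ (0,1) and every such set E, w({x : M⁺1_E(x) > λ}) ≤ C₀ · λ^{-p} · w(E), where p = log C₀ / log(1/α₀). -/

import Mathlib

open MeasureTheory Set

noncomputable def Mplus (f : ℝ → ℝ) (x : ℝ) : ℝ :=
  ⨆ h : {h : ℝ // 0 < h}, (h.1)⁻¹ * ∫ t in x..(x + h.1), |f t|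

noncomputable def Mminus (f : ℝ → ℝ) (x : ℝ) : ℝ :=
  ⨆ h : {h : ℝ // 0 < h}, (h.1)⁻¹ * ∫ t in (x - h.1)..x, |f t|

noncomputable def halo (γ : ℝ) (E : Set ℝ) : Set ℝ :=
  {x | γ < Mplus (E.indicator fun _ => (1:ℝ)) x}

noncomputable def wsize (w : ℝ → ℝ) (E : Set ℝ) : ENNReal :=
  ∫⁻ x in E, ENNReal.ofReal (w x)

noncomputable def tauber (w : ℝ → ℝ) (α : ℝ) : ENNReal :=
  ⨆ E : {E : Set ℝ // MeasurableSet E ∧ 0 < wsize w E ∧ wsize w E < ⊤},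
    wsize w (halo α E.1) / wsize w E.1

/-!
For measurable `E`, `halo γ E = {x | ∃ h > 0, γ h < |E ∩ (x, x + h]|}` is open and, by the
Lebesgue density theorem, contains almost every point of `E` when `γ < 1`. The heart of the proof
is the inclusion `halo (a b) E ⊆ halo a (halo b E)`: if `x ∉ halo a F` with `F = halo b E`, then
`x ∉ F`, so every connected component of `F ∩ (x, x + h)` is an interval whose left endpoint lies
outside `F`; hence `E` fills at most a fraction `b` of it, and summing over the components gives
`|E ∩ (x, x + h]| ≤ b |F ∩ (x, x + h]| ≤ a b h`. Since `w dx` is absolutely continuous, iterating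
the hypothesis yields `w(halo (α₀ ^ n) E) ≤ C₀ ^ n w(E)`, and for `α₀ ^ (n + 1) < λ ≤ α₀ ^ n` we
have `C₀ ^ n = (α₀ ^ n) ^ (-p) ≤ λ ^ (-p)`.
-/
open scoped ENNReal

lemma volume_inter_Ioc_ne_top (E : Set ℝ) (a b : ℝ) : volume (E ∩ Ioc a b) ≠ ∞ :=
  ((measure_mono inter_subset_right).trans_lt measure_Ioc_lt_top).ne

theorem IsOpen.measure_le_of_forall_connectedComponentIn_le {X : Type*} [TopologicalSpace X]
    [LocallyConnectedSpace X] [TopologicalSpace.SeparableSpace X] [MeasurableSpace X]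
    [OpensMeasurableSpace X] {U : Set X} (hU : IsOpen U) {μ ν : Measure X}
    (h : ∀ x ∈ U, μ (connectedComponentIn U x) ≤ ν (connectedComponentIn U x)) : μ U ≤ ν U := by
  obtain ⟨D, hDc, hDd⟩ := TopologicalSpace.exists_countable_dense X
  set S := connectedComponentIn U '' (D ∩ U)
  have hS : S.Countable := (hDc.mono inter_subset_left).image _
  have hU_eq : U = ⋃₀ S := by
    refine Subset.antisymm (fun x hx => ?_) ?_
    · obtain ⟨d, hdD, hdC⟩ := hDd.exists_mem_open hU.connectedComponentIn
        ⟨x, mem_connectedComponentIn hx⟩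
      refine ⟨_, ⟨d, ⟨hdD, connectedComponentIn_subset _ _ hdC⟩, rfl⟩, ?_⟩
      rw [← connectedComponentIn_eq hdC]
      exact mem_connectedComponentIn hx
    · rintro x ⟨_, ⟨d, -, rfl⟩, hx⟩
      exact connectedComponentIn_subset _ _ hx
  have hdisj : S.PairwiseDisjoint id := by
    rintro _ ⟨d, -, rfl⟩ _ ⟨d', -, rfl⟩ hne
    refine disjoint_left.2 fun x hx hx' => hne ?_
    rw [connectedComponentIn_eq hx, connectedComponentIn_eq hx']
  have hmeas : ∀ C ∈ S, MeasurableSet C := by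
    rintro _ ⟨d, -, rfl⟩
    exact hU.connectedComponentIn.measurableSet
  rw [hU_eq, sUnion_eq_biUnion]
  calc μ (⋃ C ∈ S, C) ≤ ∑' C : S, μ C := measure_biUnion_le μ hS id
    _ ≤ ∑' C : S, ν C := ENNReal.tsum_le_tsum fun ⟨_, d, hd, rfl⟩ => h d hd.2
    _ = ν (⋃ C ∈ S, C) := (measure_biUnion hS hdisj hmeas).symm

theorem IsOpen.eq_Ioo_csInf_csSup {α : Type*} [ConditionallyCompleteLinearOrder α]
    [TopologicalSpace α] [OrderTopology α] [DenselyOrdered α] [NoMinOrder α] [NoMaxOrder α]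
    {C : Set α} (hC : IsOpen C) (hconn : IsConnected C) (hb : BddBelow C) (ha : BddAbove C) :
    C = Ioo (sInf C) (sSup C) := by
  refine Subset.antisymm (fun x hx => ⟨?_, ?_⟩) (hconn.Ioo_csInf_csSup_subset hb ha)
  · obtain ⟨y, hy, hyC⟩ := Filter.Eventually.exists_lt (hC.mem_nhds hx)
    exact (csInf_le hb hyC).trans_lt hy
  · obtain ⟨y, hy, hyC⟩ := Filter.Eventually.exists_gt (hC.mem_nhds hx)
    exact hy.trans_le (le_csSup ha hyC)

lemma csInf_connectedComponentIn_notMem {U : Set ℝ} (hU : IsOpen U) {q : ℝ} (hq : q ∈ U)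
    (hb : BddBelow (connectedComponentIn U q)) (ha : BddAbove (connectedComponentIn U q)) :
    sInf (connectedComponentIn U q) ∉ U := by
  set C := connectedComponentIn U q
  have hC : C = Ioo (sInf C) (sSup C) :=
    hU.connectedComponentIn.eq_Ioo_csInf_csSup (isConnected_connectedComponentIn_iff.2 hq) hb ha
  have hqC : q ∈ Ioo (sInf C) (sSup C) := hC ▸ mem_connectedComponentIn hq
  intro hA
  have hIco : Ico (sInf C) (sSup C) ⊆ C := by
    refine isPreconnected_Ico.subset_connectedComponentIn (Ioo_subset_Ico_self hqC) ?_
    rintro t ⟨ht₁, ht₂⟩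
    rcases ht₁.eq_or_lt with rfl | ht₁
    · exact hA
    · exact connectedComponentIn_subset U q (hC ▸ ⟨ht₁, ht₂⟩ : t ∈ C)
  have hAC : sInf C ∈ Ioo (sInf C) (sSup C) := hC ▸ hIco ⟨le_rfl, hqC.1.trans hqC.2⟩
  exact lt_irrefl _ hAC.1

section Halo

variable {E : Set ℝ} {γ x : ℝ}

lemma intervalIntegral_abs_indicator_one (hE : MeasurableSet E) {h : ℝ} (hh : 0 ≤ h) :
    ∫ t in x..(x + h), |E.indicator (fun _ => (1 : ℝ)) t| =
      volume.real (E ∩ Ioc x (x + h)) := by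
  have habs : (fun t => |E.indicator (fun _ => (1 : ℝ)) t|) = E.indicator 1 := by
    ext t
    exact abs_of_nonneg (indicator_nonneg (fun _ _ => zero_le_one) t)
  rw [habs, intervalIntegral.integral_of_le (by linarith), integral_indicator_one hE,
    measureReal_restrict_apply hE, inter_comm]

lemma mem_halo_iff (hE : MeasurableSet E) :
    x ∈ halo γ E ↔ ∃ h > 0, γ * h < volume.real (E ∩ Ioc x (x + h)) := by
  have hbdd : BddAbove (range fun h : {h : ℝ // 0 < h} =>
      h.1⁻¹ * ∫ t in x..(x + h.1), |E.indicator (fun _ => (1 : ℝ)) t|) := by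
    refine ⟨1, forall_mem_range.2 fun ⟨h, hh⟩ => ?_⟩
    rw [intervalIntegral_abs_indicator_one hE hh.le, inv_mul_le_iff₀ hh, mul_one]
    calc volume.real (E ∩ Ioc x (x + h)) ≤ volume.real (Ioc x (x + h)) :=
          measureReal_mono inter_subset_right measure_Ioc_lt_top.ne
      _ = h := by simp [hh.le]
  simp only [halo, Mplus, mem_ofPred_eq, lt_ciSup_iff hbdd, Subtype.exists, exists_prop]
  refine exists_congr fun h => and_congr_right fun hh => ?_
  rw [intervalIntegral_abs_indicator_one hE hh.le, lt_inv_mul_iff₀ hh, mul_comm]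

lemma notMem_halo_iff (hE : MeasurableSet E) (hγ : 0 ≤ γ) :
    x ∉ halo γ E ↔ ∀ h > 0, volume (E ∩ Ioc x (x + h)) ≤ ENNReal.ofReal (γ * h) := by
  simp only [mem_halo_iff hE, not_exists, not_and, not_lt]
  refine forall₂_congr fun h hh => ?_
  rw [← ENNReal.ofReal_le_ofReal_iff (by positivity),
    ofReal_measureReal (volume_inter_Ioc_ne_top _ _ _)]

lemma halo_anti {γ' : ℝ} (h : γ' ≤ γ) : halo γ E ⊆ halo γ' E :=
  fun _ hx => h.trans_lt hx

lemma isOpen_halo (hE : MeasurableSet E) (γ : ℝ) : IsOpen (halo γ E) := by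
  set f := fun t => |E.indicator (fun _ => (1 : ℝ)) t|
  have hf : ∀ a b, IntervalIntegrable f volume a b := fun a b =>
    (((locallyIntegrable_const (1 : ℝ)).indicator hE).integrableOn_isCompact
      isCompact_uIcc).intervalIntegrable.abs
  have hcont : ∀ h > 0, Continuous fun x => volume.real (E ∩ Ioc x (x + h)) := by
    intro h hh
    have : (fun x => volume.real (E ∩ Ioc x (x + h))) =
        fun x => (∫ t in 0..(x + h), f t) - ∫ t in 0..x, f t := by
      ext x
      rw [intervalIntegral.integral_interval_sub_left (hf _ _) (hf _ _),
        intervalIntegral_abs_indicator_one hE hh.le]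
    rw [this]
    exact ((intervalIntegral.continuous_primitive hf 0).comp (continuous_add_const h)).sub
      (intervalIntegral.continuous_primitive hf 0)
  have : halo γ E = ⋃ h > 0, (fun x => volume.real (E ∩ Ioc x (x + h))) ⁻¹' Ioi (γ * h) := by
    ext x
    simp [mem_halo_iff hE]
  rw [this]
  exact isOpen_biUnion fun h hh => isOpen_Ioi.preimage (hcont h hh)

lemma volume_diff_halo (hE : MeasurableSet E) {β : ℝ} (hβ₀ : 0 ≤ β) (hβ₁ : β < 1) :
    volume (E \ halo β E) = 0 := by
  have hae : ∀ᵐ t ∂volume.restrict E, t ∈ halo β E := by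
    filter_upwards [Besicovitch.ae_tendsto_measure_inter_div volume E] with t ht
    by_contra hnot
    have hbound : ∀ r ∈ Ioi (0 : ℝ), volume (E ∩ Metric.closedBall t r) /
        volume (Metric.closedBall t r) ≤ ENNReal.ofReal ((1 + β) / 2) := by
      intro r hr
      have hsplit : E ∩ Metric.closedBall t r ⊆ Icc (t - r) t ∪ E ∩ Ioc t (t + r) := by
        rintro s ⟨hsE, hs⟩
        rw [Real.closedBall_eq_Icc] at hs
        rcases le_or_gt s t with hst | hst
        · exact Or.inl ⟨hs.1, hst⟩
        · exact Or.inr ⟨hsE, hst, hs.2⟩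
      refine ENNReal.div_le_of_le_mul ?_
      calc volume (E ∩ Metric.closedBall t r)
          ≤ volume (Icc (t - r) t) + volume (E ∩ Ioc t (t + r)) :=
            (measure_mono hsplit).trans (measure_union_le _ _)
        _ ≤ ENNReal.ofReal r + ENNReal.ofReal (β * r) := by
            rw [Real.volume_Icc, sub_sub_cancel]
            exact add_le_add_right ((notMem_halo_iff hE hβ₀).1 hnot r hr) _
        _ = ENNReal.ofReal ((1 + β) / 2) * volume (Metric.closedBall t r) := by
            have hr : (0 : ℝ) < r := hr
            rw [Real.volume_closedBall, ← ENNReal.ofReal_add hr.le (by positivity),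
              ← ENNReal.ofReal_mul (by linarith)]
            ring_nf
    have h1 : (1 : ℝ≥0∞) ≤ ENNReal.ofReal ((1 + β) / 2) :=
      le_of_tendsto ht (eventually_nhdsWithin_of_forall hbound)
    exact h1.not_gt (ENNReal.ofReal_lt_one.2 (by linarith))
  rw [ae_restrict_iff' hE, ae_iff] at hae
  simp only [Classical.not_imp] at hae
  exact hae

lemma subset_halo_of_isOpen (hE : IsOpen E) (hγ : γ < 1) : E ⊆ halo γ E := by
  intro x hx
  obtain ⟨u, hxu, hu⟩ := exists_Ico_subset_of_mem_nhds (hE.mem_nhds hx) ⟨x + 1, by linarith⟩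
  obtain ⟨c, hxc, hcu⟩ := exists_between hxu
  have hsub : Ioc x c ⊆ E := fun t ht => hu ⟨ht.1.le, ht.2.trans_lt hcu⟩
  rw [mem_halo_iff hE.measurableSet]
  refine ⟨c - x, sub_pos.2 hxc, ?_⟩
  rw [add_sub_cancel, inter_eq_right.2 hsub, Real.volume_real_Ioc_of_le hxc.le]
  exact mul_lt_of_lt_one_left (sub_pos.2 hxc) hγ

lemma volume_inter_le_of_csInf_notMem_halo (hE : MeasurableSet E) {b : ℝ} (hb : 0 ≤ b)
    {V : Set ℝ} (hV : IsOpen V) (hVb : BddBelow V) (hVa : BddAbove V)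
    (hleft : ∀ q ∈ V, sInf (connectedComponentIn V q) ∉ halo b E) :
    volume (E ∩ V) ≤ ENNReal.ofReal b * volume V := by
  have := hV.measure_le_of_forall_connectedComponentIn_le
    (μ := volume.restrict E) (ν := ENNReal.ofReal b • volume) fun q hq => ?_
  · rwa [Measure.restrict_apply' hE, inter_comm, Measure.smul_apply, smul_eq_mul] at this
  set C := connectedComponentIn V q
  have hCV : C ⊆ V := connectedComponentIn_subset V q
  have hC : C = Ioo (sInf C) (sSup C) :=
    hV.connectedComponentIn.eq_Ioo_csInf_csSup (isConnected_connectedComponentIn_iff.2 hq)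
      (hVb.mono hCV) (hVa.mono hCV)
  have hAB : sInf C < sSup C := by
    have hqC : q ∈ Ioo (sInf C) (sSup C) := hC ▸ mem_connectedComponentIn hq
    exact hqC.1.trans hqC.2
  have htail := (notMem_halo_iff hE hb).1 (hleft q hq) (sSup C - sInf C) (sub_pos.2 hAB)
  rw [add_sub_cancel] at htail
  rw [Measure.restrict_apply' hE, Measure.smul_apply, smul_eq_mul, hC, Real.volume_Ioo,
    ← ENNReal.ofReal_mul hb, inter_comm]
  exact (measure_mono (inter_subset_inter_right E Ioo_subset_Ioc_self)).trans htail

lemma halo_mul_subset (hE : MeasurableSet E) {a b : ℝ} (ha₀ : 0 ≤ a) (ha₁ : a < 1)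
    (hb₀ : 0 ≤ b) (hb₁ : b < 1) : halo (a * b) E ⊆ halo a (halo b E) := by
  set F := halo b E
  have hF : IsOpen F := isOpen_halo hE b
  intro x
  contrapose
  intro hx
  have hxF : x ∉ F := fun h => hx (subset_halo_of_isOpen hF ha₁ h)
  rw [notMem_halo_iff hF.measurableSet ha₀] at hx
  rw [notMem_halo_iff hE (mul_nonneg ha₀ hb₀)]
  intro h hh
  set V := F ∩ Ioo x (x + h)
  have hV : IsOpen V := hF.inter isOpen_Ioo
  have hVb : BddBelow V := bddBelow_Ioo.mono inter_subset_right
  have hVa : BddAbove V := bddAbove_Ioo.mono inter_subset_right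
  have hleft : ∀ q ∈ V, sInf (connectedComponentIn V q) ∉ F := by
    intro q hq hAF
    set C := connectedComponentIn V q
    have hCV : C ⊆ V := connectedComponentIn_subset V q
    have hqC : q ∈ C := mem_connectedComponentIn hq
    have hxA : x ≤ sInf C := le_csInf ⟨q, hqC⟩ fun t ht => (hCV ht).2.1.le
    have hAh : sInf C < x + h := (csInf_le (hVb.mono hCV) hqC).trans_lt hq.2.2
    rcases hxA.eq_or_lt with hxA | hxA
    · exact hxF (hxA ▸ hAF)
    · exact csInf_connectedComponentIn_notMem hV hq (hVb.mono hCV) (hVa.mono hCV)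
        ⟨hAF, hxA, hAh⟩
  have hEF : E ≤ᵐ[volume] F := ae_le_set.2 (volume_diff_halo hE hb₀ hb₁)
  calc volume (E ∩ Ioc x (x + h)) = volume (E ∩ Ioo x (x + h)) :=
        measure_congr ((ae_eq_refl E).inter Ioo_ae_eq_Ioc.symm)
    _ ≤ volume (E ∩ V) := measure_mono_ae <| by
        filter_upwards [hEF] with t ht using fun htE => ⟨htE.1, ht htE.1, htE.2⟩
    _ ≤ ENNReal.ofReal b * volume V :=
        volume_inter_le_of_csInf_notMem_halo hE hb₀ hV hVb hVa hleft
    _ ≤ ENNReal.ofReal b * volume (F ∩ Ioc x (x + h)) := by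
        gcongr
        exact inter_subset_inter_right F Ioo_subset_Ioc_self
    _ ≤ ENNReal.ofReal b * ENNReal.ofReal (a * h) := by gcongr; exact hx h hh
    _ = ENNReal.ofReal (a * b * h) := by rw [← ENNReal.ofReal_mul hb₀]; ring_nf

end Halo

theorem measure_halo_pow_succ_le {μ : Measure ℝ} (hμ : μ ≪ volume) {α : ℝ} (hα₀ : 0 ≤ α)
    (hα₁ : α < 1) {C : ℝ≥0∞} (hC : C ≠ ∞)
    (h : ∀ F : Set ℝ, MeasurableSet F → 0 < μ F → μ F < ∞ → μ (halo α F) ≤ C * μ F)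
    {E : Set ℝ} (hE : MeasurableSet E) (hpos : 0 < μ E) (hfin : μ E < ∞) (n : ℕ) :
    μ (halo (α ^ (n + 1)) E) ≤ C ^ (n + 1) * μ E := by
  induction n with
  | zero => simpa using h E hE hpos hfin
  | succ n ih =>
    set F := halo (α ^ (n + 1)) E
    have hβ₀ : 0 ≤ α ^ (n + 1) := pow_nonneg hα₀ _
    have hβ₁ : α ^ (n + 1) < 1 := pow_lt_one₀ hα₀ hα₁ n.succ_ne_zero
    have hEF : μ E ≤ μ F := measure_mono_ae (ae_le_set.2 (hμ (volume_diff_halo hE hβ₀ hβ₁)))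
    have hFfin : μ F < ∞ :=
      ih.trans_lt (ENNReal.mul_lt_top (ENNReal.pow_lt_top hC.lt_top) hfin)
    calc μ (halo (α ^ (n + 1 + 1)) E) ≤ μ (halo α F) :=
          measure_mono (pow_succ' α (n + 1) ▸ halo_mul_subset hE hα₀ hα₁ hβ₀ hβ₁)
      _ ≤ C * μ F := h F (isOpen_halo hE _).measurableSet (hpos.trans_le hEF) hFfin
      _ ≤ C * (C ^ (n + 1) * μ E) := by gcongr
      _ = C ^ (n + 1 + 1) * μ E := by ring

lemma pow_le_rpow_neg_log_div_log {α C lam : ℝ} (hα₀ : 0 < α) (hα₁ : α < 1) (hC : 1 ≤ C)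
    {n : ℕ} (hlam : 0 < lam) (hn : lam ≤ α ^ n) :
    C ^ n ≤ lam ^ (-(Real.log C / Real.log (1 / α))) := by
  set p := Real.log C / Real.log (1 / α)
  have hlog : 0 < Real.log (1 / α) := Real.log_pos (one_lt_one_div hα₀ hα₁)
  have hαp : α ^ (-p) = C := by
    rw [Real.rpow_def_of_pos hα₀, show Real.log α * -p = p * Real.log (1 / α) by
      rw [one_div, Real.log_inv]; ring, div_mul_cancel₀ _ hlog.ne', Real.exp_log (by linarith)]
  calc C ^ n = (α ^ n) ^ (-p) := by
        rw [← hαp, ← Real.rpow_natCast, ← Real.rpow_natCast, ← Real.rpow_mul hα₀.le,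
          ← Real.rpow_mul hα₀.le, mul_comm]
    _ ≤ lam ^ (-p) := Real.rpow_le_rpow_of_nonpos hlam hn
        (neg_nonpos.2 (div_nonneg (Real.log_nonneg hC) hlog.le))

lemma wsize_eq_withDensity (w : ℝ → ℝ) :
    wsize w = volume.withDensity (fun x => ENNReal.ofReal (w x)) :=
  funext fun E => (withDensity_apply' _ E).symm

theorem stmt8_general (w : ℝ → ℝ)
    (α₀ C₀ : ℝ) (hα₀ : α₀ ∈ Ioo (0:ℝ) 1) (hC₀ : 1 ≤ C₀)
    (h : ∀ E : Set ℝ, MeasurableSet E → 0 < wsize w E → wsize w E < ⊤ →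
      wsize w (halo α₀ E) ≤ ENNReal.ofReal C₀ * wsize w E) :
    ∀ lam : ℝ, lam ∈ Ioo (0:ℝ) 1 → ∀ E : Set ℝ, MeasurableSet E →
      0 < wsize w E → wsize w E < ⊤ →
      wsize w (halo lam E)
        ≤ ENNReal.ofReal (C₀ * lam ^ (-(Real.log C₀ / Real.log (1 / α₀)))) * wsize w E := by
  intro lam hlam E hE hpos hfin
  rw [wsize_eq_withDensity] at h hpos hfin ⊢
  obtain ⟨n, hn₁, hn⟩ := exists_nat_pow_near_of_lt_one hlam.1 hlam.2.le hα₀.1 hα₀.2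
  calc _ ≤ _ := measure_mono (halo_anti hn₁.le)
    _ ≤ ENNReal.ofReal C₀ ^ (n + 1) * _ :=
        measure_halo_pow_succ_le (withDensity_absolutelyContinuous _ _) hα₀.1.le hα₀.2
          ENNReal.ofReal_ne_top h hE hpos hfin n
    _ ≤ _ := by
        gcongr
        rw [← ENNReal.ofReal_pow (by linarith), pow_succ']
        exact ENNReal.ofReal_le_ofReal (mul_le_mul_of_nonneg_left
          (pow_le_rpow_neg_log_div_log hα₀.1 hα₀.2 hC₀ hlam.1 hn) (by linarith))

theorem stmt8 (w : ℝ → ℝ) (hw : ∀ x, 0 ≤ w x) (hloc : LocallyIntegrable w volume)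
    (α₀ C₀ : ℝ) (hα₀ : α₀ ∈ Ioo (0:ℝ) 1) (hC₀ : 1 ≤ C₀)
    (h : ∀ E : Set ℝ, MeasurableSet E → 0 < wsize w E → wsize w E < ⊤ →
      wsize w (halo α₀ E) ≤ ENNReal.ofReal C₀ * wsize w E) :
    ∀ lam : ℝ, lam ∈ Ioo (0:ℝ) 1 → ∀ E : Set ℝ, MeasurableSet E →
      0 < wsize w E → wsize w E < ⊤ →
      wsize w (halo lam E)
        ≤ ENNReal.ofReal (C₀ * lam ^ (-(Real.log C₀ / Real.log (1 / α₀)))) * wsize w E :=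
  stmt8_general w α₀ C₀ hα₀ hC₀ h
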